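/- Let q : ℝ → ℝ be twice continuously differentiable, satisfy the Painlevé II equation q''(s) = s·q(s) + 2·q(s)³ for all s ∈ ℝ, and satisfy the decay bound: there is a constant C with |q(s)| ≤ C·e^{−s} and |q'(s)| ≤ C·e^{−s} for all s ≥ 0. Define F(s) := exp(−∫_s^∞ (x−s)·q(x)² dx), u₀₀(s) := ∫_s^∞ q(x)² dx, q₁ := q' + u₀₀·q, u₁₀(s) := ∫_s^∞ q₁(x)·q(x) dx, and u₁₁(s) := ∫_s^∞ q₁(x)² dx. Then for every s ∈ ℝ, F(s)·(u₁₀(s)² − u₀₀(s)·u₁₁(s)) = −(1/6)·F'(s) + (s/3)·F''(s) − (1/12)·F''''(s). -/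

import Mathlib

/-!
Along a solution of Painlevé II, `H = q'² - s q² - q⁴` has derivative `-q²`; with
`q₁ = q' + H q`, the functions `(H² - q²)/2` and `H³/3 - H q² - 2 q q'/3 - s H/3` have
derivatives `-q₁ q` and `-q₁²`. All three vanish at `+∞` because of the exponential decay, so they
are the tail integrals `u₀₀`, `u₁₀`, `u₁₁`. Moreover `(log F)' = u₀₀` and `u₀₀' = -q²`, so every
derivative of `F` is `F` times a polynomial in `s, q, q', u₀₀`, and the identity becomes a
polynomial identity in `s, q, q'`.
-/

open MeasureTheory Set Filter Real Asymptotics Topology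

theorem hasDerivAt_integral_Ioi {g : ℝ → ℝ} (hg : Continuous g)
    (hint : ∀ a, IntegrableOn g (Ioi a)) (s : ℝ) :
    HasDerivAt (fun t => ∫ x in Ioi t, g x) (-g s) s := by
  have htail : (fun t => ∫ x in Ioi t, g x) = fun t => (∫ x in Ioi s, g x) - ∫ x in s..t, g x := by
    funext t
    rw [← intervalIntegral.integral_Ioi_sub_Ioi' (hint s) (hint t), sub_sub_cancel]
  rw [htail]
  exact (hg.integral_hasStrictDerivAt s s).hasDerivAt.const_sub _

theorem hasDerivAt_integral_Ioi_sub_mul {g : ℝ → ℝ} (hg : Continuous g)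
    (hint : ∀ a, IntegrableOn g (Ioi a)) (hint' : ∀ a, IntegrableOn (fun x => x * g x) (Ioi a))
    (s : ℝ) :
    HasDerivAt (fun t => ∫ x in Ioi t, (x - t) * g x) (-∫ x in Ioi s, g x) s := by
  have hsplit : (fun t => ∫ x in Ioi t, (x - t) * g x)
      = fun t => (∫ x in Ioi t, x * g x) - t * ∫ x in Ioi t, g x := by
    funext t
    rw [← integral_const_mul, ← integral_sub (hint' t) ((hint t).const_mul t)]
    simp only [sub_mul]
  rw [hsplit]
  exact ((hasDerivAt_integral_Ioi (g := fun x => x * g x) (by fun_prop) hint' s).sub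
    ((hasDerivAt_id' s).mul (hasDerivAt_integral_Ioi hg hint s))).congr_deriv (by ring)

theorem Asymptotics.IsBigO.integrableOn_Ioi_of_exp_neg {g : ℝ → ℝ} (hg : Continuous g)
    (ho : g =O[atTop] fun x => exp (-x)) (a : ℝ) : IntegrableOn g (Ioi a) :=
  integrable_of_isBigO_exp_neg one_pos hg.continuousOn (by simpa using ho)

theorem isBigO_exp_neg_of_abs_le {f : ℝ → ℝ} {C : ℝ}
    (hf : ∀ s, 0 ≤ s → |f s| ≤ C * exp (-s)) : f =O[atTop] fun x => exp (-x) :=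
  .of_bound C <| (eventually_ge_atTop 0).mono fun s hs => by
    simpa [Real.norm_eq_abs, abs_of_pos (exp_pos _)] using hf s hs

theorem isBigO_pow_mul_mul_exp_neg {f g : ℝ → ℝ} (k : ℕ) (hf : f =O[atTop] fun x => exp (-x))
    (hg : g =O[atTop] fun x => exp (-x)) :
    (fun x => x ^ k * (f x * g x)) =O[atTop] fun x => exp (-x) := by
  have hpow : (fun x : ℝ => x ^ k * exp (-x)) =O[atTop] fun _ => (1 : ℝ) :=
    (tendsto_pow_mul_exp_neg_atTop_nhds_zero k).isBigO_one ℝ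
  calc (fun x => x ^ k * (f x * g x))
      =O[atTop] fun x => x ^ k * (exp (-x) * exp (-x)) := (isBigO_refl _ _).mul (hf.mul hg)
    _ = fun x => (x ^ k * exp (-x)) * exp (-x) := by funext x; ring
    _ =O[atTop] fun x => 1 * exp (-x) := hpow.mul (isBigO_refl _ _)
    _ = fun x => exp (-x) := by simp

theorem isBigO_mul_exp_neg {f g : ℝ → ℝ} (hf : f =O[atTop] fun x => exp (-x))
    (hg : g =O[atTop] fun x => exp (-x)) : (fun x => f x * g x) =O[atTop] fun x => exp (-x) := by
  simpa using isBigO_pow_mul_mul_exp_neg 0 hf hg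

theorem isBigO_sq_exp_neg {f : ℝ → ℝ} (hf : f =O[atTop] fun x => exp (-x)) :
    (fun x => f x ^ 2) =O[atTop] fun x => exp (-x) := by
  simpa only [sq] using isBigO_mul_exp_neg hf hf

theorem integral_Ioi_eq_of_hasDerivAt {g G : ℝ → ℝ} (hgc : Continuous g)
    (hgO : g =O[atTop] fun x => exp (-x)) (hG : ∀ s, HasDerivAt G (-g s) s)
    (hG0 : Tendsto G atTop (𝓝 0)) (s : ℝ) :
    ∫ x in Ioi s, g x = G s := by
  have := integral_Ioi_of_hasDerivAt_of_tendsto' (f := fun t => -G t) (f' := g)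
    (fun x _ => by simpa using (hG x).fun_neg) (hgO.integrableOn_Ioi_of_exp_neg hgc s)
    (by simpa using hG0.neg)
  rwa [zero_sub, neg_neg] at this

theorem hasDerivAt_exp_neg_integral_Ioi_sub_mul_sq {q : ℝ → ℝ} (hqc : Continuous q)
    (hqO : q =O[atTop] fun x => exp (-x)) (s : ℝ) :
    HasDerivAt (fun t => exp (-∫ x in Ioi t, (x - t) * q x ^ 2))
      ((∫ x in Ioi s, q x ^ 2) * exp (-∫ x in Ioi s, (x - s) * q x ^ 2)) s := by
  have hint := (isBigO_sq_exp_neg hqO).integrableOn_Ioi_of_exp_neg (by fun_prop)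
  have hxq2O : (fun x => x * q x ^ 2) =O[atTop] fun x => exp (-x) := by
    simpa only [sq, pow_one] using isBigO_pow_mul_mul_exp_neg 1 hqO hqO
  have hint' := hxq2O.integrableOn_Ioi_of_exp_neg (by fun_prop)
  simpa [mul_comm] using (hasDerivAt_integral_Ioi_sub_mul (by fun_prop) hint hint' s).neg.exp

theorem continuous_of_hasDerivAt {f f' : ℝ → ℝ} (hf : ∀ s, HasDerivAt f (f' s) s) :
    Continuous f :=
  continuousOn_univ.1 <| HasDerivAt.continuousOn fun s _ => hf s

theorem hasDerivAt_deriv_of_contDiff_two {q : ℝ → ℝ} (hq : ContDiff ℝ 2 q) (s : ℝ) :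
    HasDerivAt (deriv q) (iteratedDeriv 2 q s) s := by
  rw [iteratedDeriv_succ, iteratedDeriv_one]
  simpa only [iteratedDeriv_one] using
    (hq.differentiable_iteratedDeriv 1 (by norm_num) s).hasDerivAt

section LogDerivative

variable {F u q q' : ℝ → ℝ}

theorem iteratedDeriv_two_eq_of_hasDerivAt (hF : ∀ s, HasDerivAt F (u s * F s) s)
    (hu : ∀ s, HasDerivAt u (-(q s ^ 2)) s) :
    iteratedDeriv 2 F = fun s => (u s ^ 2 - q s ^ 2) * F s := by
  funext s
  rw [iteratedDeriv_succ, iteratedDeriv_one, funext fun t => (hF t).deriv]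
  exact ((hu s).fun_mul (hF s)).deriv.trans (by ring)

theorem iteratedDeriv_three_eq_of_hasDerivAt (hF : ∀ s, HasDerivAt F (u s * F s) s)
    (hu : ∀ s, HasDerivAt u (-(q s ^ 2)) s) (hq : ∀ s, HasDerivAt q (q' s) s) :
    iteratedDeriv 3 F = fun s => (u s ^ 3 - 3 * u s * q s ^ 2 - 2 * q s * q' s) * F s := by
  funext s
  rw [iteratedDeriv_succ, iteratedDeriv_two_eq_of_hasDerivAt hF hu]
  exact ((((hu s).fun_pow 2).fun_sub ((hq s).fun_pow 2)).fun_mul (hF s)).deriv.trans (by ring)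

theorem iteratedDeriv_four_eq_of_hasDerivAt (hF : ∀ s, HasDerivAt F (u s * F s) s)
    (hu : ∀ s, HasDerivAt u (-(q s ^ 2)) s) (hq : ∀ s, HasDerivAt q (q' s) s)
    (hq' : ∀ s, HasDerivAt q' (s * q s + 2 * q s ^ 3) s) :
    iteratedDeriv 4 F = fun s => (u s ^ 4 - 6 * u s ^ 2 * q s ^ 2 - 8 * u s * q s * q' s
      - q s ^ 4 - 2 * q' s ^ 2 - 2 * s * q s ^ 2) * F s := by
  funext s
  rw [iteratedDeriv_succ, iteratedDeriv_three_eq_of_hasDerivAt hF hu hq]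
  exact (((((hu s).fun_pow 3).fun_sub (((hu s).const_mul 3).fun_mul ((hq s).fun_pow 2))).fun_sub
    (((hq s).const_mul 2).fun_mul (hq' s))).fun_mul (hF s)).deriv.trans (by ring)

end LogDerivative

def painleveIIHamiltonian (q q' : ℝ → ℝ) (s : ℝ) : ℝ := q' s ^ 2 - s * q s ^ 2 - q s ^ 4

section PainleveII

variable {q q' : ℝ → ℝ}

local notation "H" => painleveIIHamiltonian q q'

theorem hasDerivAt_painleveIIHamiltonian (hq : ∀ s, HasDerivAt q (q' s) s)
    (hq' : ∀ s, HasDerivAt q' (s * q s + 2 * q s ^ 3) s) (s : ℝ) :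
    HasDerivAt H (-(q s ^ 2)) s :=
  ((((hq' s).fun_pow 2).fun_sub ((hasDerivAt_id' s).fun_mul ((hq s).fun_pow 2))).fun_sub
    ((hq s).fun_pow 4)).congr_deriv (by ring)

theorem isBigO_pow_mul_painleveIIHamiltonian (hqO : q =O[atTop] fun x => exp (-x))
    (hq'O : q' =O[atTop] fun x => exp (-x)) (k : ℕ) :
    (fun s => s ^ k * H s) =O[atTop] fun x => exp (-x) := by
  have hq2O := isBigO_sq_exp_neg hqO
  have := ((isBigO_pow_mul_mul_exp_neg k hq'O hq'O).sub
    (isBigO_pow_mul_mul_exp_neg (k + 1) hqO hqO)).sub (isBigO_pow_mul_mul_exp_neg k hq2O hq2O)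
  refine this.congr_left fun s => ?_
  simp only [painleveIIHamiltonian]
  ring

theorem isBigO_add_painleveIIHamiltonian_mul (hqO : q =O[atTop] fun x => exp (-x))
    (hq'O : q' =O[atTop] fun x => exp (-x)) :
    (fun x => q' x + H x * q x) =O[atTop] fun x => exp (-x) :=
  hq'O.add (isBigO_mul_exp_neg (by simpa using isBigO_pow_mul_painleveIIHamiltonian hqO hq'O 0) hqO)

theorem tendsto_painleveIIHamiltonian (hqO : q =O[atTop] fun x => exp (-x))
    (hq'O : q' =O[atTop] fun x => exp (-x)) (k : ℕ) :
    Tendsto (fun s => s ^ k * H s) atTop (𝓝 0) :=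
  (isBigO_pow_mul_painleveIIHamiltonian hqO hq'O k).trans_tendsto tendsto_exp_neg_atTop_nhds_zero

theorem integral_Ioi_sq_eq_painleveIIHamiltonian (hq : ∀ s, HasDerivAt q (q' s) s)
    (hq' : ∀ s, HasDerivAt q' (s * q s + 2 * q s ^ 3) s) (hqO : q =O[atTop] fun x => exp (-x))
    (hq'O : q' =O[atTop] fun x => exp (-x)) (s : ℝ) :
    ∫ x in Ioi s, q x ^ 2 = H s :=
  have hqc := continuous_of_hasDerivAt hq
  integral_Ioi_eq_of_hasDerivAt (by fun_prop) (isBigO_sq_exp_neg hqO)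
    (hasDerivAt_painleveIIHamiltonian hq hq')
    (by simpa using tendsto_painleveIIHamiltonian hqO hq'O 0) s

theorem integral_Ioi_add_painleveIIHamiltonian_mul_mul (hq : ∀ s, HasDerivAt q (q' s) s)
    (hq' : ∀ s, HasDerivAt q' (s * q s + 2 * q s ^ 3) s) (hqO : q =O[atTop] fun x => exp (-x))
    (hq'O : q' =O[atTop] fun x => exp (-x)) (s : ℝ) :
    ∫ x in Ioi s, (q' x + H x * q x) * q x = (H s ^ 2 - q s ^ 2) / 2 := by
  have hqc := continuous_of_hasDerivAt hq
  have hq'c := continuous_of_hasDerivAt hq'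
  have hHc := continuous_of_hasDerivAt (hasDerivAt_painleveIIHamiltonian hq hq')
  have hq0 := hqO.trans_tendsto tendsto_exp_neg_atTop_nhds_zero
  have hH0 : Tendsto H atTop (𝓝 0) := by simpa using tendsto_painleveIIHamiltonian hqO hq'O 0
  have hG (s : ℝ) :
      HasDerivAt (fun t => (H t ^ 2 - q t ^ 2) / 2) (-((q' s + H s * q s) * q s)) s :=
    ((((hasDerivAt_painleveIIHamiltonian hq hq' s).fun_pow 2).fun_sub
      ((hq s).fun_pow 2)).div_const 2).congr_deriv (by ring)
  exact integral_Ioi_eq_of_hasDerivAt (by fun_prop)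
    (isBigO_mul_exp_neg (isBigO_add_painleveIIHamiltonian_mul hqO hq'O) hqO) hG
    (by simpa using ((hH0.pow 2).sub (hq0.pow 2)).div_const 2) s

theorem integral_Ioi_add_painleveIIHamiltonian_mul_sq (hq : ∀ s, HasDerivAt q (q' s) s)
    (hq' : ∀ s, HasDerivAt q' (s * q s + 2 * q s ^ 3) s) (hqO : q =O[atTop] fun x => exp (-x))
    (hq'O : q' =O[atTop] fun x => exp (-x)) (s : ℝ) :
    ∫ x in Ioi s, (q' x + H x * q x) ^ 2
      = H s ^ 3 / 3 - H s * q s ^ 2 - 2 * (q s * q' s) / 3 - s * H s / 3 := by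
  have hqc := continuous_of_hasDerivAt hq
  have hq'c := continuous_of_hasDerivAt hq'
  have hHc := continuous_of_hasDerivAt (hasDerivAt_painleveIIHamiltonian hq hq')
  have hq0 := hqO.trans_tendsto tendsto_exp_neg_atTop_nhds_zero
  have hq'0 := hq'O.trans_tendsto tendsto_exp_neg_atTop_nhds_zero
  have hH0 : Tendsto H atTop (𝓝 0) := by simpa using tendsto_painleveIIHamiltonian hqO hq'O 0
  have hsH0 : Tendsto (fun s => s * H s) atTop (𝓝 0) := by
    simpa using tendsto_painleveIIHamiltonian hqO hq'O 1
  have hG (s : ℝ) :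
      HasDerivAt (fun t => H t ^ 3 / 3 - H t * q t ^ 2 - 2 * (q t * q' t) / 3 - t * H t / 3)
        (-((q' s + H s * q s) ^ 2)) s := by
    have hH := hasDerivAt_painleveIIHamiltonian hq hq' s
    refine (((hH.fun_pow 3).div_const 3 |>.fun_sub (hH.fun_mul ((hq s).fun_pow 2))).fun_sub
      ((((hq s).fun_mul (hq' s)).const_mul 2).div_const 3) |>.fun_sub
      (((hasDerivAt_id' s).fun_mul hH).div_const 3)).congr_deriv ?_
    simp only [painleveIIHamiltonian]
    ring
  exact integral_Ioi_eq_of_hasDerivAt (by fun_prop)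
    (isBigO_sq_exp_neg (isBigO_add_painleveIIHamiltonian_mul hqO hq'O)) hG
    (by simpa using ((((hH0.pow 3).div_const 3).sub (hH0.mul (hq0.pow 2))).sub
      (((hq0.mul hq'0).const_mul 2).div_const 3)).sub (hsH0.div_const 3)) s

end PainleveII

/-- The identity `[u₁₀² - u₀₀·u₁₁]·F = -(1/6)·F' + (s/3)·F'' - (1/12)·F⁽⁴⁾`, where
`F(s) = exp(-∫_s^∞ (x-s) q(x)² dx)`, `u₀₀(s) = ∫_s^∞ q(x)² dx`, `q₁ = q' + u₀₀·q`,
`u₁₀(s) = ∫_s^∞ q₁(x) q(x) dx`, `u₁₁(s) = ∫_s^∞ q₁(x)² dx`, and `q` is a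
Painlevé II solution with exponential decay at `+∞`. -/
theorem F_A_eq (q F u00 q1 u10 u11 : ℝ → ℝ) (hq : ContDiff ℝ 2 q)
    (hP2 : ∀ s : ℝ, iteratedDeriv 2 q s = s * q s + 2 * q s ^ 3)
    (C : ℝ)
    (hdecay : ∀ s : ℝ, 0 ≤ s →
      |q s| ≤ C * Real.exp (-s) ∧ |deriv q s| ≤ C * Real.exp (-s))
    (hF : ∀ s : ℝ, F s = Real.exp (-(∫ x in Set.Ioi s, (x - s) * q x ^ 2)))
    (hu00 : ∀ s : ℝ, u00 s = ∫ x in Set.Ioi s, q x ^ 2)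
    (hq1 : ∀ s : ℝ, q1 s = deriv q s + u00 s * q s)
    (hu10 : ∀ s : ℝ, u10 s = ∫ x in Set.Ioi s, q1 x * q x)
    (hu11 : ∀ s : ℝ, u11 s = ∫ x in Set.Ioi s, q1 x ^ 2) :
    ∀ s : ℝ, F s * (u10 s ^ 2 - u00 s * u11 s) =
      -(1 / 6) * deriv F s + (s / 3) * iteratedDeriv 2 F s
        - (1 / 12) * iteratedDeriv 4 F s := by
  have hqd : ∀ s, HasDerivAt q (deriv q s) s := fun s =>
    (hq.differentiable two_ne_zero s).hasDerivAt
  have hq'd : ∀ s, HasDerivAt (deriv q) (s * q s + 2 * q s ^ 3) s := fun s =>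
    hP2 s ▸ hasDerivAt_deriv_of_contDiff_two hq s
  have hqO := isBigO_exp_neg_of_abs_le fun s hs => (hdecay s hs).1
  have hq'O := isBigO_exp_neg_of_abs_le fun s hs => (hdecay s hs).2
  have hFd : ∀ s, HasDerivAt F (u00 s * F s) s := fun s => by
    rw [funext hF, hu00]
    exact hasDerivAt_exp_neg_integral_Ioi_sub_mul_sq (continuous_of_hasDerivAt hqd) hqO s
  obtain rfl : u00 = painleveIIHamiltonian q (deriv q) :=
    funext fun s => (hu00 s).trans (integral_Ioi_sq_eq_painleveIIHamiltonian hqd hq'd hqO hq'O s)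
  obtain rfl : q1 = fun s => deriv q s + painleveIIHamiltonian q (deriv q) s * q s := funext hq1
  intro s
  rw [hu10, hu11, integral_Ioi_add_painleveIIHamiltonian_mul_mul hqd hq'd hqO hq'O,
    integral_Ioi_add_painleveIIHamiltonian_mul_sq hqd hq'd hqO hq'O, (hFd s).deriv,
    iteratedDeriv_two_eq_of_hasDerivAt hFd (hasDerivAt_painleveIIHamiltonian hqd hq'd),
    iteratedDeriv_four_eq_of_hasDerivAt hFd (hasDerivAt_painleveIIHamiltonian hqd hq'd) hqd hq'd]
  simp only [painleveIIHamiltonian]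
  ring
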